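/- Let G = (V,E,λ) and G' = (V',E',λ') be labelled directed graphs, 𝒯 a finite set of templates, c ≥ 1, and l ∈ ℕ. Run the c-bounded 𝒯-WL algorithm (with the same c-bounded HASH function, injective on c-capped arguments) on both graphs for l rounds. Then for all v ∈ V and v' ∈ V', (G,v) and (G',v') are l-c-𝒯-bisimilar if and only if col^l(v) = col^l(v'). -/
import Mathlib


set_option maxHeartbeats 1000000

attribute [local instance 10] Classical.propDecidable

/-- A template `T = (V, E⁺, E⁻, r)`: vertex set `Fin (n+1)` (cardinality `n+1`),
root `0`, edges `pos`, non-edges `neg`, with `pos ∩ neg = ∅`. -/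
structure Template where
  n : ℕ
  pos : Finset (Fin (n + 1) × Fin (n + 1))
  neg : Finset (Fin (n + 1) × Fin (n + 1))
  disj : ∀ p, ¬(p ∈ pos ∧ p ∈ neg)

/-- A labelled directed graph with labels in `Λ`: a finite vertex set (a finite
subset of `ℕ`), an edge relation `E ⊆ V × V`, and a labelling of the nodes. -/
structure LGraph (Λ : Type) where
  verts : Finset ℕ
  edge : ℕ → ℕ → Prop
  lab : ℕ → Λ
  edge_mem : ∀ u w, edge u w → u ∈ verts ∧ w ∈ verts

/-- `f` is a template embedding of `T` into the pointed graph `(G, w)`: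
an injective map sending the root to `w`, `E⁺`-pairs to edges and `E⁻`-pairs to
non-edges. -/
def IsEmb {Λ : Type} (T : Template) (G : LGraph Λ) (w : ℕ) (f : Fin (T.n + 1) → ℕ) : Prop :=
  Function.Injective f ∧ f 0 = w ∧ (∀ i, f i ∈ G.verts) ∧
    (∀ p ∈ T.pos, G.edge (f p.1) (f p.2)) ∧ (∀ p ∈ T.neg, ¬ G.edge (f p.1) (f p.2))

/-- The (finite) set `emb(T,(G,w))` of template embeddings of `T` into `(G, w)`. -/
noncomputable def embFinset {Λ : Type} (T : Template) (G : LGraph Λ) (w : ℕ) :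
    Finset (Fin (T.n + 1) → ℕ) :=
  (Fintype.piFinset fun _ : Fin (T.n + 1) => G.verts).filter (IsEmb T G w)

/-- Forth condition: any `k` pairwise distinct template embeddings of `T` at `(G,v)`
can be matched by `k` pairwise distinct embeddings at `(G',v')`, pointwise related
by `Z`. -/
def Forth {Λ : Type} (Z : ℕ → ℕ → Prop) (T : Template) (G G' : LGraph Λ)
    (v v' : ℕ) (k : ℕ) : Prop :=
  ∀ F : Fin k → (Fin (T.n + 1) → ℕ), Function.Injective F → (∀ i, IsEmb T G v (F i)) →
    ∃ F' : Fin k → (Fin (T.n + 1) → ℕ), Function.Injective F' ∧ (∀ i, IsEmb T G' v' (F' i)) ∧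
      ∀ i u, Z (F i u) (F' i u)

/-- `Z` is a graded `l`-`𝒯`-bisimulation between `G` and `G'`, where the allowed
multiplicities `k` in the back-and-forth conditions are those satisfying `P`. -/
def IsBisimP {Λ : Type} (𝒯 : Finset Template) (P : ℕ → Prop) (G G' : LGraph Λ) :
    ℕ → (ℕ → ℕ → Prop) → Prop
  | 0, Z => ∀ v v', Z v v' → G.lab v = G'.lab v'
  | l + 1, Z => ∃ Z', IsBisimP 𝒯 P G G' l Z' ∧
      ∀ v v', Z v v' → Z' v v' ∧ ∀ T ∈ 𝒯, ∀ k, P k →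
        Forth Z' T G G' v v' k ∧ Forth (fun a b => Z' b a) T G' G v' v k

/-- `(G,v)` and `(G',v')` are graded `l`-`𝒯`-bisimilar. -/
def GBisimilar {Λ : Type} (𝒯 : Finset Template) (l : ℕ) (G : LGraph Λ) (v : ℕ)
    (G' : LGraph Λ) (v' : ℕ) : Prop :=
  ∃ Z, IsBisimP 𝒯 (fun k => 1 ≤ k) G G' l Z ∧ Z v v'

/-- `(G,v)` and `(G',v')` are `l`-`c`-`𝒯`-bisimilar (multiplicities restricted to `k ≤ c`). -/
def BBisimilar {Λ : Type} (𝒯 : Finset Template) (l c : ℕ) (G : LGraph Λ) (v : ℕ)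
    (G' : LGraph Λ) (v' : ℕ) : Prop :=
  ∃ Z, IsBisimP 𝒯 (fun k => 1 ≤ k ∧ k ≤ c) G G' l Z ∧ Z v v'

/-- `A↾c`: cap all multiplicities of a multiset at `c`. -/
noncomputable def mcap {α : Type} (c : ℕ) (m : Multiset α) : Multiset α :=
  m.toFinset.val.bind fun a => Multiset.replicate (min c (m.count a)) a

/-- The `𝒯`-WL colouring of `G` after `l` rounds, using `hash0` for the initial
colouring and `hash` for the refinement rounds; at each round the new colour of `v`
hashes its previous colour together with, for each template `T ∈ 𝒯`, the multiset of
`T`-labelled colourings induced by the template embeddings at `v`. -/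
noncomputable def colWL {Λ C : Type} (𝒯 : Finset Template) (hash0 : Λ → C)
    (hash : C → ((T : {x // x ∈ 𝒯}) → Multiset (Fin (T.1.n + 1) → C)) → C)
    (G : LGraph Λ) : ℕ → ℕ → C
  | 0, v => hash0 (G.lab v)
  | l + 1, v =>
      hash (colWL 𝒯 hash0 hash G l v)
        (fun T => (embFinset T.1 G v).val.map
          (fun f => fun u => colWL 𝒯 hash0 hash G l (f u)))

/-- A multiset function is `c`-bounded if its value is unchanged when all
multiplicities larger than `c` are replaced by `c`. -/
def CBoundedFun {α β : Type} (c : ℕ) (g : Multiset α → β) : Prop :=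
  ∀ m, g m = g (mcap c m)

/-- An `nAr`-ary `L`-layer `𝒯`-GNN with feature dimension `d`: templates from `𝒯`,
template-aggregation functions (invariant under root-fixing label-preserving template
automorphisms), outer multiset aggregation functions, combination functions, and a
Boolean classification function. -/
structure TGNN (𝒯 : Finset Template) (d nAr L : ℕ) where
  temp : Fin L → Fin nAr → Template
  temp_mem : ∀ l j, temp l j ∈ 𝒯
  aggT : (l : Fin L) → (j : Fin nAr) → ((Fin ((temp l j).n + 1) → (Fin d → ℝ)) → (Fin d → ℝ))
  aggT_inv : ∀ (l : Fin L) (j : Fin nAr) (σ : Equiv.Perm (Fin ((temp l j).n + 1)))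
      (lab₁ lab₂ : Fin ((temp l j).n + 1) → (Fin d → ℝ)),
      σ 0 = 0 →
      (∀ p : Fin ((temp l j).n + 1) × Fin ((temp l j).n + 1),
        p ∈ (temp l j).pos ↔ (σ p.1, σ p.2) ∈ (temp l j).pos) →
      (∀ p : Fin ((temp l j).n + 1) × Fin ((temp l j).n + 1),
        p ∈ (temp l j).neg ↔ (σ p.1, σ p.2) ∈ (temp l j).neg) →
      (∀ u, u ≠ 0 → lab₁ u = lab₂ (σ u)) →
      aggT l j lab₁ = aggT l j lab₂
  agg : Fin L → Fin nAr → Multiset (Fin d → ℝ) → (Fin d → ℝ)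
  comb : Fin L → (Fin d → ℝ) → (Fin nAr → (Fin d → ℝ)) → (Fin d → ℝ)
  cls : (Fin d → ℝ) → Bool

/-- The feature vector `λ^l(v)` of node `v` after `l` layers of the `𝒯`-GNN `N` on
input graph `G`. -/
noncomputable def TGNN.feat {𝒯 : Finset Template} {d nAr L : ℕ} (N : TGNN 𝒯 d nAr L)
    (G : LGraph (Fin d → ℝ)) : ℕ → ℕ → (Fin d → ℝ)
  | 0, v => G.lab v
  | l + 1, v =>
      if h : l < L then
        N.comb ⟨l, h⟩ (N.feat G l v)
          (fun j => N.agg ⟨l, h⟩ j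
            ((embFinset (N.temp ⟨l, h⟩ j) G v).val.map
              (fun f => N.aggT ⟨l, h⟩ j (fun u => N.feat G l (f u)))))
      else fun _ => 0

/-- A `𝒯`-GNN is `c`-bounded if all its outer aggregation functions are `c`-bounded. -/
def TGNN.IsCBounded {𝒯 : Finset Template} {d nAr L : ℕ} (N : TGNN 𝒯 d nAr L) (c : ℕ) : Prop :=
  ∀ l j, CBoundedFun c (N.agg l j)

def boolToReal (b : Bool) : ℝ := if b then 1 else 0

/-- Identify a `{0,1}^d`-labelled graph with a real-vector labelled graph. -/
def LGraph.toReal {d : ℕ} (G : LGraph (Fin d → Bool)) : LGraph (Fin d → ℝ) :=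
  ⟨G.verts, G.edge, fun v i => boolToReal (G.lab v i), G.edge_mem⟩

/-- Initialize real feature vectors of dimension `d'` from `{0,1}^a`-labels
(the first `a` coordinates hold the truth values of the propositions, the rest are `0`). -/
def initG {a : ℕ} (d' : ℕ) (G : LGraph (Fin a → Bool)) : LGraph (Fin d' → ℝ) :=
  ⟨G.verts, G.edge, fun v i => if h : (i : ℕ) < a then boolToReal (G.lab v ⟨i, h⟩) else 0,
    G.edge_mem⟩

/-- Formulae of graded template modal logic `GML(𝒯)` over propositions `AP`
(`⊤` included; a modality `⟨T⟩^{≥j}(φ₁,…,φ_{n_T})` takes `n_T = |V_T| - 1` arguments). -/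
inductive GML (AP : Type) : Type
  | top : GML AP
  | prop : AP → GML AP
  | neg : GML AP → GML AP
  | and : GML AP → GML AP → GML AP
  | dia : (T : Template) → ℕ → (Fin T.n → GML AP) → GML AP

/-- Semantics of `GML(𝒯)` on pointed labelled graphs:
`(G,v) ⊨ ⟨T⟩^{≥j}(φ⃗)` iff at least `j` embeddings `f ∈ emb(T,(G,v))` satisfy
`(G, f(i)) ⊨ φᵢ` for all `1 ≤ i ≤ n_T`. -/
def Sat {AP : Type} (G : LGraph (AP → Bool)) : GML AP → ℕ → Prop
  | .top, _ => True
  | .prop p, v => G.lab v p = true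
  | .neg φ, v => ¬ Sat G φ v
  | .and φ ψ, v => Sat G φ v ∧ Sat G ψ v
  | .dia T j φs, v =>
      j ≤ ((embFinset T G v).filter
        (fun f => ∀ i : Fin T.n, Sat G (φs i) (f i.succ))).card

/-- Modal depth. -/
def GML.md {AP : Type} : GML AP → ℕ
  | .top => 0
  | .prop _ => 0
  | .neg φ => φ.md
  | .and φ ψ => max φ.md ψ.md
  | .dia _ _ φs => 1 + Finset.univ.sup fun i => (φs i).md

/-- Counting bound: the least `c` such that every modality `⟨T⟩^{≥j}` occurring in the
formula has `j ≤ c`. -/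
def GML.cb {AP : Type} : GML AP → ℕ
  | .top => 0
  | .prop _ => 0
  | .neg φ => φ.cb
  | .and φ ψ => max φ.cb ψ.cb
  | .dia _ j φs => max j (Finset.univ.sup fun i => (φs i).cb)

/-- Syntactic depth: counts both Boolean connectives and modalities along the deepest
branch of the syntax tree. -/
def GML.sd {AP : Type} : GML AP → ℕ
  | .top => 0
  | .prop _ => 0
  | .neg φ => 1 + φ.sd
  | .and φ ψ => 1 + max φ.sd ψ.sd
  | .dia _ _ φs => 1 + Finset.univ.sup fun i => (φs i).sd

/-- Well-formedness of a `GML(𝒯)` formula: all templates come from `𝒯` and all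
grades satisfy `j ≥ 1`. -/
def GML.Wf {AP : Type} (𝒯 : Finset Template) : GML AP → Prop
  | .top => True
  | .prop _ => True
  | .neg φ => φ.Wf 𝒯
  | .and φ ψ => φ.Wf 𝒯 ∧ ψ.Wf 𝒯
  | .dia T j φs => T ∈ 𝒯 ∧ 1 ≤ j ∧ ∀ i, (φs i).Wf 𝒯

/-- Finite conjunction (`⊤` for the empty list). -/
def bigConj {AP : Type} : List (GML AP) → GML AP
  | [] => .top
  | φ :: rest => .and φ (bigConj rest)

/-- `|S^{(G,v)}_{T,φ⃗}|`: the number of embeddings `f ∈ emb(T,(G,v))` with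
`(G, f(i)) ⊨ φᵢ` for all `1 ≤ i ≤ n_T`. -/
noncomputable def Scard {AP : Type} (G : LGraph (AP → Bool)) (T : Template) (v : ℕ)
    (φs : Fin T.n → GML AP) : ℕ :=
  ((embFinset T G v).filter (fun f => ∀ i : Fin T.n, Sat G (φs i) (f i.succ))).card

/-- The `l`-characteristic formula `χ^l_{(G,v)}`. -/
noncomputable def charU {AP : Type} [Fintype AP] (𝒯 : Finset Template) :
    ℕ → LGraph (AP → Bool) → ℕ → GML AP
  | 0 => fun G v =>
      bigConj ((Finset.univ : Finset AP).toList.map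
        (fun p => if G.lab v p then GML.prop p else GML.neg (GML.prop p)))
  | l + 1 => fun G v =>
      GML.and (charU 𝒯 l G v)
        (bigConj (𝒯.toList.map (fun T =>
          GML.and
            (bigConj ((embFinset T G v).toList.map (fun f =>
              GML.dia T (Scard G T v (fun i => charU 𝒯 l G (f i.succ)))
                (fun i => charU 𝒯 l G (f i.succ)))))
            (GML.neg (GML.dia T (Scard G T v (fun _ => GML.top) + 1)
              (fun _ => GML.top))))))

/-- `reps m` is a system of representatives for the `m`-`c`-`𝒯`-bisimilarity classes of
finite pointed labelled graphs: every representative is a genuine pointed graph, every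
pointed graph is `m`-`c`-`𝒯`-bisimilar to some representative, and distinct
representatives are non-bisimilar. -/
def RepSystem {AP : Type} (𝒯 : Finset Template) (c : ℕ)
    (reps : ℕ → Finset (LGraph (AP → Bool) × ℕ)) : Prop :=
  ∀ m : ℕ,
    (∀ q ∈ reps m, q.2 ∈ q.1.verts) ∧
    (∀ (G : LGraph (AP → Bool)) (v : ℕ), v ∈ G.verts →
      ∃ q ∈ reps m, BBisimilar 𝒯 m c q.1 q.2 G v) ∧
    (∀ q ∈ reps m, ∀ q' ∈ reps m, BBisimilar 𝒯 m c q.1 q.2 q'.1 q'.2 → q = q')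

/-- The bounded `l`-`c`-characteristic formula `χ^{l,c}_{(G,v)}`, relative to a chosen
system `reps` of representatives of the bounded bisimilarity classes. -/
noncomputable def charB {AP : Type} [Fintype AP] (𝒯 : Finset Template) (c : ℕ)
    (reps : ℕ → Finset (LGraph (AP → Bool) × ℕ)) :
    ℕ → LGraph (AP → Bool) → ℕ → GML AP
  | 0 => fun G v =>
      bigConj ((Finset.univ : Finset AP).toList.map
        (fun p => if G.lab v p then GML.prop p else GML.neg (GML.prop p)))
  | l + 1 => fun G v =>
      GML.and (charB 𝒯 c reps l G v)
        (bigConj (𝒯.toList.map (fun T =>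
          GML.and
            (bigConj ((embFinset T G v).toList.map (fun f =>
              GML.dia T (min c (Scard G T v (fun i => charB 𝒯 c reps l G (f i.succ))))
                (fun i => charB 𝒯 c reps l G (f i.succ)))))
            (bigConj (((Fintype.piFinset (fun _ : Fin T.n => reps l)).filter
                (fun t => Scard G T v
                  (fun i => charB 𝒯 c reps l (t i).1 (t i).2) + 1 ≤ c)).toList.map
              (fun t => GML.neg (GML.dia T
                  (Scard G T v (fun i => charB 𝒯 c reps l (t i).1 (t i).2) + 1)
                  (fun i => charB 𝒯 c reps l (t i).1 (t i).2))))))))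

/-- Standard graded forth condition on out-neighbours. -/
def StdForth {Λ : Type} (Z : ℕ → ℕ → Prop) (G G' : LGraph Λ) (v v' : ℕ) (k : ℕ) : Prop :=
  ∀ us : Fin k → ℕ, Function.Injective us → (∀ i, G.edge v (us i)) →
    ∃ us' : Fin k → ℕ, Function.Injective us' ∧ (∀ i, G'.edge v' (us' i)) ∧
      ∀ i, Z (us i) (us' i)

/-- `Z` is a standard graded `l`-bisimulation (the relation underlying standard 1-WL
colour refinement). -/
def IsStdBisim {Λ : Type} (G G' : LGraph Λ) : ℕ → (ℕ → ℕ → Prop) → Prop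
  | 0, Z => ∀ v v', Z v v' → G.lab v = G'.lab v'
  | l + 1, Z => ∃ Z', IsStdBisim G G' l Z' ∧
      ∀ v v', Z v v' → Z' v v' ∧ ∀ k, 1 ≤ k →
        StdForth Z' G G' v v' k ∧ StdForth (fun a b => Z' b a) G' G v' v k

/-- `(G,v)` and `(G',v')` are standard graded `l`-bisimilar. -/
def StdBisimilar {Λ : Type} (l : ℕ) (G : LGraph Λ) (v : ℕ) (G' : LGraph Λ) (v' : ℕ) : Prop :=
  ∃ Z, IsStdBisim G G' l Z ∧ Z v v'

/-- The edge template `T₁ = ({r,a}, E⁺ = {(r,a)}, E⁻ = ∅, r)`. -/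
def T1 : Template := ⟨1, {(0, 1)}, ∅, by decide⟩

/-- The triangle template `T△ = ({r,a,b}, E⁺ = {(r,a),(a,b),(b,r)}, E⁻ = ∅, r)`. -/
def Ttri : Template := ⟨2, {(0, 1), (1, 2), (2, 0)}, ∅, by decide⟩

/-- The directed 3-cycle, all nodes with the same constant label. -/
def G3 : LGraph Unit where
  verts := {0, 1, 2}
  edge u w := (u = 0 ∧ w = 1) ∨ (u = 1 ∧ w = 2) ∨ (u = 2 ∧ w = 0)
  lab _ := ()
  edge_mem := by rintro u w (⟨rfl, rfl⟩ | ⟨rfl, rfl⟩ | ⟨rfl, rfl⟩) <;> simp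

/-- The directed 6-cycle, all nodes with the same constant label. -/
def G6 : LGraph Unit where
  verts := Finset.range 6
  edge u w := u < 6 ∧ w = (u + 1) % 6
  lab _ := ()
  edge_mem := by
    rintro u w ⟨hu, rfl⟩
    simp only [Finset.mem_range]
    omega
section Helpers

lemma count_irrel {α : Type} {i1 i2 : DecidableEq α} (a : α) (m : Multiset α) :
    @Multiset.count α i1 a m = @Multiset.count α i2 a m := by
  have h : i1 = i2 := Subsingleton.elim _ _
  rw [h]

lemma count_mcap {α : Type} [DecidableEq α] (c : ℕ) (m : Multiset α) (a : α) :
    (mcap c m).count a = min c (m.count a) := by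
  unfold mcap
  rw [Multiset.count_bind, Finset.sum_map_val]
  by_cases h : a ∈ m
  · rw [Finset.sum_eq_single a]
    · rw [Multiset.count_replicate_self]
      exact congrArg (min c) (count_irrel a m)
    · intro b _ hb
      rw [Multiset.count_replicate, if_neg hb]
    · intro hna
      exact absurd ((@Multiset.mem_toFinset α
        (fun a b => Classical.propDecidable (a = b)) a m).mpr h) hna
  · have h0 : m.count a = 0 := Multiset.count_eq_zero.mpr h
    rw [h0, Nat.min_zero]
    apply Finset.sum_eq_zero
    intro b hb
    have hab : b ≠ a := fun e => h (e ▸ (@Multiset.mem_toFinset α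
      (fun a b => Classical.propDecidable (a = b)) b m).mp (Finset.mem_val.mp hb))
    rw [Multiset.count_replicate, if_neg hab]

lemma mcap_idem {α : Type} (c : ℕ) (m : Multiset α) : mcap c (mcap c m) = mcap c m := by
  refine Multiset.ext.mpr fun a => ?_
  rw [count_mcap, count_mcap]
  omega

lemma count_map_filter {α β : Type} [DecidableEq β] (S : Finset α) (g : α → β) (b : β)
    [DecidablePred fun x => g x = b] :
    (S.val.map g).count b = (S.filter (fun x => g x = b)).card := by
  rw [Multiset.count_map, Finset.card, Finset.filter_val]
  exact congrArg Multiset.card (Multiset.filter_congr (fun x _ => eq_comm))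

lemma mem_embFinset {Λ : Type} {T : Template} {G : LGraph Λ} {w : ℕ}
    {f : Fin (T.n + 1) → ℕ} : f ∈ embFinset T G w ↔ IsEmb T G w f := by
  unfold embFinset
  simp only [Finset.mem_filter, Fintype.mem_piFinset]
  exact ⟨fun h => h.2, fun h => ⟨fun i => h.2.2.1 i, h⟩⟩

lemma exists_inj_of_card_le {β : Type} (k : ℕ) (S : Finset β) (h : k ≤ S.card) :
    ∃ F : Fin k → β, Function.Injective F ∧ ∀ i, F i ∈ S := by
  classical
  obtain ⟨e⟩ := Function.Embedding.nonempty_of_card_le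
    (α := Fin k) (β := {x // x ∈ S}) (by simpa using h)
  exact ⟨fun i => (e i).1, fun i j hij => e.injective (Subtype.ext hij), fun i => (e i).2⟩

lemma exists_inj_matching {α β : Type} [DecidableEq α] (k : ℕ) (S : Finset β) (g : β → α) (F : Fin k → α)
    (h : ∀ a : α, (Finset.univ.filter (fun i => F i = a)).card
        ≤ (S.filter (fun b => g b = a)).card) :
    ∃ F' : Fin k → β, Function.Injective F' ∧ (∀ i, F' i ∈ S) ∧ ∀ i, g (F' i) = F i := by
  have he : ∀ a : α,
      Nonempty ({i : Fin k // F i = a} ↪ {b // b ∈ S.filter (fun b => g b = a)}) := by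
    intro a
    apply Function.Embedding.nonempty_of_card_le
    rw [Fintype.card_subtype, Fintype.card_coe]
    exact h a
  let e : ∀ a : α, {i : Fin k // F i = a} ↪ {b // b ∈ S.filter (fun b => g b = a)} :=
    fun a => (he a).some
  refine ⟨fun i => (e (F i) ⟨i, rfl⟩).1, ?_,
    fun i => (Finset.mem_filter.mp (e (F i) ⟨i, rfl⟩).2).1,
    fun i => (Finset.mem_filter.mp (e (F i) ⟨i, rfl⟩).2).2⟩
  have key : ∀ (a b : α) (hab : a = b) (i : Fin k) (hi : F i = a),
      ((e a ⟨i, hi⟩).1 : β) = (e b ⟨i, hi.trans hab⟩).1 := by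
    rintro a b rfl i hi; rfl
  intro i j hij
  simp only at hij
  have hgi : g ((e (F i) ⟨i, rfl⟩).1) = F i := (Finset.mem_filter.mp (e (F i) ⟨i, rfl⟩).2).2
  have hgj : g ((e (F j) ⟨j, rfl⟩).1) = F j := (Finset.mem_filter.mp (e (F j) ⟨j, rfl⟩).2).2
  have hFij : F i = F j := by rw [← hgi, ← hgj, hij]
  have h2 : ((e (F j) ⟨i, hFij⟩).1 : β) = (e (F j) ⟨j, rfl⟩).1 := by
    rw [← key (F i) (F j) hFij i rfl]; exact hij
  have h3 := (e (F j)).injective (Subtype.ext h2)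
  exact congrArg Subtype.val h3

lemma Forth_mono {Λ : Type} {Z W : ℕ → ℕ → Prop} (h : ∀ a b, Z a b → W a b)
    {T : Template} {G G' : LGraph Λ} {v v' k : ℕ} :
    Forth Z T G G' v v' k → Forth W T G G' v v' k := by
  intro hf F hi he
  obtain ⟨F', h1, h2, h3⟩ := hf F hi he
  exact ⟨F', h1, h2, fun i u => h _ _ (h3 i u)⟩

variable {Λ C : Type} (𝒯 : Finset Template) (c : ℕ) (hash0 : Λ → C)
  (hash : C → ((T : {x // x ∈ 𝒯}) → Multiset (Fin (T.1.n + 1) → C)) → C)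

lemma count_min_le (T : Template) (G G' : LGraph Λ) (l v v' : ℕ) (Z' : ℕ → ℕ → Prop)
    (hcol : ∀ x y, Z' x y → colWL 𝒯 hash0 hash G l x = colWL 𝒯 hash0 hash G' l y)
    (hforth : ∀ k, 1 ≤ k → k ≤ c → Forth Z' T G G' v v' k)
    (a : Fin (T.n + 1) → C) :
    min c (((embFinset T G v).val.map (fun f u => colWL 𝒯 hash0 hash G l (f u))).count a)
      ≤ ((embFinset T G' v').val.map (fun f u => colWL 𝒯 hash0 hash G' l (f u))).count a := by
  classical
  set g : (Fin (T.n + 1) → ℕ) → Fin (T.n + 1) → C :=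
    fun f u => colWL 𝒯 hash0 hash G l (f u) with hgdef
  set g' : (Fin (T.n + 1) → ℕ) → Fin (T.n + 1) → C :=
    fun f u => colWL 𝒯 hash0 hash G' l (f u) with hg'def
  set k := min c (((embFinset T G v).val.map g).count a) with hkdef
  rcases Nat.eq_zero_or_pos k with hk0 | hk1
  · omega
  have hkc : k ≤ c := min_le_left _ _
  have hkcount : k ≤ ((embFinset T G v).filter (fun f => g f = a)).card := by
    rw [← count_map_filter]
    exact min_le_right _ _
  obtain ⟨F, hFinj, hFmem⟩ := exists_inj_of_card_le k _ hkcount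
  obtain ⟨F', hF'inj, hF'emb, hZ⟩ := hforth k hk1 hkc F hFinj
    (fun i => mem_embFinset.mp (Finset.mem_filter.mp (hFmem i)).1)
  have hmem' : ∀ i, F' i ∈ (embFinset T G' v').filter (fun f => g' f = a) := by
    intro i
    refine Finset.mem_filter.mpr ⟨mem_embFinset.mpr (hF'emb i), ?_⟩
    funext u
    have h1 : colWL 𝒯 hash0 hash G l (F i u) = colWL 𝒯 hash0 hash G' l (F' i u) :=
      hcol _ _ (hZ i u)
    have h2 : g (F i) = a := (Finset.mem_filter.mp (hFmem i)).2
    calc g' (F' i) u = g (F i) u := h1.symm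
      _ = a u := congrFun h2 u
  calc k = (Finset.univ : Finset (Fin k)).card := by simp
    _ ≤ ((embFinset T G' v').filter (fun f => g' f = a)).card :=
        Finset.card_le_card_of_injOn F' (fun i _ => hmem' i) (fun i _ j _ h => hF'inj h)
    _ = ((embFinset T G' v').val.map g').count a := (count_map_filter _ _ _).symm

lemma forth_core (T : Template) (G G' : LGraph Λ) (l v v' : ℕ)
    (hM : ∀ a : Fin (T.n + 1) → C,
      min c (((embFinset T G v).val.map (fun f u => colWL 𝒯 hash0 hash G l (f u))).count a)
      = min c (((embFinset T G' v').val.map (fun f u => colWL 𝒯 hash0 hash G' l (f u))).count a))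
    (k : ℕ) (hk : k ≤ c) :
    Forth (fun x y => colWL 𝒯 hash0 hash G l x = colWL 𝒯 hash0 hash G' l y) T G G' v v' k := by
  classical
  intro F hFinj hFemb
  set g : (Fin (T.n + 1) → ℕ) → Fin (T.n + 1) → C :=
    fun f u => colWL 𝒯 hash0 hash G l (f u) with hgdef
  set g' : (Fin (T.n + 1) → ℕ) → Fin (T.n + 1) → C :=
    fun f u => colWL 𝒯 hash0 hash G' l (f u) with hg'def
  have hcard : ∀ a : Fin (T.n + 1) → C,
      (Finset.univ.filter (fun i : Fin k => g (F i) = a)).card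
        ≤ ((embFinset T G' v').filter (fun f => g' f = a)).card := by
    intro a
    have h1 : (Finset.univ.filter (fun i : Fin k => g (F i) = a)).card
        ≤ ((embFinset T G v).filter (fun f => g f = a)).card :=
      Finset.card_le_card_of_injOn F
        (fun i hi => Finset.mem_filter.mpr
          ⟨mem_embFinset.mpr (hFemb i), (Finset.mem_filter.mp hi).2⟩)
        (fun i _ j _ h => hFinj h)
    have h2 : (Finset.univ.filter (fun i : Fin k => g (F i) = a)).card ≤ k := by
      calc _ ≤ (Finset.univ : Finset (Fin k)).card := Finset.card_filter_le _ _
        _ = k := by simp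
    have h3 : (Finset.univ.filter (fun i : Fin k => g (F i) = a)).card
        ≤ min c (((embFinset T G v).val.map g).count a) := by
      refine le_min (h2.trans hk) ?_
      rw [count_map_filter]
      exact h1
    rw [hM a] at h3
    calc _ ≤ min c (((embFinset T G' v').val.map g').count a) := h3
      _ ≤ ((embFinset T G' v').val.map g').count a := min_le_right _ _
      _ = _ := count_map_filter _ _ _
  obtain ⟨F', hinj, hmem, hgeq⟩ := exists_inj_matching k (embFinset T G' v') g'
    (fun i => g (F i)) hcard
  exact ⟨F', hinj, fun i => mem_embFinset.mp (hmem i),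
    fun i u => (congrFun (hgeq i) u).symm⟩

lemma twl_soundness (G G' : LGraph Λ)
    (hcap : ∀ x A, hash x A = hash x (fun T => mcap c (A T))) :
    ∀ (l : ℕ) (Z : ℕ → ℕ → Prop), IsBisimP 𝒯 (fun k => 1 ≤ k ∧ k ≤ c) G G' l Z →
    ∀ v v', Z v v' → colWL 𝒯 hash0 hash G l v = colWL 𝒯 hash0 hash G' l v' := by
  intro l
  induction l with
  | zero =>
    intro Z hZ v v' h
    exact congrArg hash0 (hZ v v' h)
  | succ l IH =>
    intro Z hZ v v' h
    obtain ⟨Z', hZ', hcond⟩ := hZ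
    obtain ⟨hvv', hforth⟩ := hcond v v' h
    have hcol : ∀ x y, Z' x y → colWL 𝒯 hash0 hash G l x = colWL 𝒯 hash0 hash G' l y :=
      fun x y hxy => IH Z' hZ' x y hxy
    show hash (colWL 𝒯 hash0 hash G l v)
        (fun T => (embFinset T.1 G v).val.map (fun f u => colWL 𝒯 hash0 hash G l (f u)))
      = hash (colWL 𝒯 hash0 hash G' l v')
        (fun T => (embFinset T.1 G' v').val.map (fun f u => colWL 𝒯 hash0 hash G' l (f u)))
    rw [hcap (colWL 𝒯 hash0 hash G l v) _, hcap (colWL 𝒯 hash0 hash G' l v') _]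
    rw [hcol v v' hvv']
    congr 1
    funext T
    refine Multiset.ext.mpr fun a => ?_
    rw [count_mcap, count_mcap]
    have hone : ∀ k, 1 ≤ k → k ≤ c → Forth Z' T.1 G G' v v' k :=
      fun k h1 h2 => (hforth T.1 T.2 k ⟨h1, h2⟩).1
    have hback : ∀ k, 1 ≤ k → k ≤ c → Forth (fun a b => Z' b a) T.1 G' G v' v k :=
      fun k h1 h2 => (hforth T.1 T.2 k ⟨h1, h2⟩).2
    have hle1 := count_min_le 𝒯 c hash0 hash T.1 G G' l v v' Z' hcol hone a
    have hle2 := count_min_le 𝒯 c hash0 hash T.1 G' G l v' v (fun a b => Z' b a)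
      (fun x y hxy => (hcol y x hxy).symm) hback a
    exact le_antisymm (le_min (min_le_left _ _) hle1) (le_min (min_le_left _ _) hle2)

lemma twl_completeness (G G' : LGraph Λ)
    (h0inj : Function.Injective hash0)
    (hcap : ∀ x A, hash x A = hash x (fun T => mcap c (A T)))
    (hinj : ∀ x A y B, (∀ T, mcap c (A T) = A T) → (∀ T, mcap c (B T) = B T) →
      hash x A = hash y B → x = y ∧ A = B) :
    ∀ l, IsBisimP 𝒯 (fun k => 1 ≤ k ∧ k ≤ c) G G' l
      (fun v v' => colWL 𝒯 hash0 hash G l v = colWL 𝒯 hash0 hash G' l v') := by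
  intro l
  induction l with
  | zero =>
    intro v v' h
    exact h0inj h
  | succ l IH =>
    refine ⟨_, IH, ?_⟩
    intro v v' h
    have h' : hash (colWL 𝒯 hash0 hash G l v)
        (fun T => mcap c ((embFinset T.1 G v).val.map (fun f u => colWL 𝒯 hash0 hash G l (f u))))
      = hash (colWL 𝒯 hash0 hash G' l v')
        (fun T => mcap c ((embFinset T.1 G' v').val.map
          (fun f u => colWL 𝒯 hash0 hash G' l (f u)))) := by
      rw [← hcap, ← hcap]
      exact h
    obtain ⟨hx, hAB⟩ := hinj _ _ _ _ (fun T => mcap_idem c _) (fun T => mcap_idem c _) h'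
    refine ⟨hx, ?_⟩
    intro T hT k hk
    have hMT : ∀ a : Fin (T.n + 1) → C,
        min c (((embFinset T G v).val.map (fun f u => colWL 𝒯 hash0 hash G l (f u))).count a)
        = min c (((embFinset T G' v').val.map
            (fun f u => colWL 𝒯 hash0 hash G' l (f u))).count a) := by
      intro a
      have h1 := congrArg (Multiset.count a) (congrFun hAB ⟨T, hT⟩)
      rwa [count_mcap, count_mcap] at h1
    refine ⟨forth_core 𝒯 c hash0 hash T G G' l v v' hMT k hk.2, ?_⟩
    exact Forth_mono (fun a b hab => hab.symm)
      (forth_core 𝒯 c hash0 hash T G' G l v' v (fun a => (hMT a).symm) k hk.2)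

end Helpers

/-- `l`-`c`-`𝒯`-bisimilarity coincides with indistinguishability by `l`
rounds of the `c`-bounded `𝒯`-WL algorithm, where the hash function cannot distinguish
multiplicities above `c` and is injective on `c`-capped arguments. -/
theorem boundedTWL_iff_boundedBisimilar {Λ C : Type} (𝒯 : Finset Template)
    (c : ℕ) (hc : 1 ≤ c)
    (hash0 : Λ → C)
    (hash : C → ((T : {x // x ∈ 𝒯}) → Multiset (Fin (T.1.n + 1) → C)) → C)
    (h0inj : Function.Injective hash0)
    (hcap : ∀ x A, hash x A = hash x (fun T => mcap c (A T)))
    (hinj : ∀ x A y B, (∀ T, mcap c (A T) = A T) → (∀ T, mcap c (B T) = B T) →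
      hash x A = hash y B → x = y ∧ A = B)
    (G G' : LGraph Λ) (l : ℕ) (v v' : ℕ) (hv : v ∈ G.verts) (hv' : v' ∈ G'.verts) :
    BBisimilar 𝒯 l c G v G' v' ↔ colWL 𝒯 hash0 hash G l v = colWL 𝒯 hash0 hash G' l v' := by
  constructor
  · rintro ⟨Z, hZ, hvv'⟩
    exact twl_soundness 𝒯 c hash0 hash G G' hcap l Z hZ v v' hvv'
  · intro h
    exact ⟨_, twl_completeness 𝒯 c hash0 hash G G' h0inj hcap hinj l, h⟩
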